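/- arXiv:1507.08596 — 4 statements merged into one kernel-verified Lean document; each statement's English description precedes it below -/
import Mathlib

section
/- Let S be a monic interval polynomial with extremal test polynomials g1, g2 (even parts) and h1, h2 (odd parts) as in Kharitonov's construction. If for some real ω ≥ 0 we have Re(g1(S, iω)) · Re(g2(S, iω)) > 0, then for every polynomial P ∈ S, Re(P(iω)) ≠ 0. Similarly, if Im(h1(S, iω)) · Im(h2(S, iω)) > 0, then for every P ∈ S, Im(P(iω)) ≠ 0. In particular, if for every ω ≥ 0 at least one of these two products is strictly positive, then no polynomial P ∈ S has a root on the imaginary axis of the form iω with ω ≥ 0. -/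
open Polynomial Finset

noncomputable def reg1 (a b : ℕ → ℝ) (n : ℕ) (ω : ℝ) : ℝ :=
  ∑ j ∈ Finset.range (n / 2 + 1),
    (-1 : ℝ) ^ j * (if Even j then a (2 * j) else b (2 * j)) * ω ^ (2 * j)

noncomputable def reg2 (a b : ℕ → ℝ) (n : ℕ) (ω : ℝ) : ℝ :=
  ∑ j ∈ Finset.range (n / 2 + 1),
    (-1 : ℝ) ^ j * (if Even j then b (2 * j) else a (2 * j)) * ω ^ (2 * j)

noncomputable def imh1 (a b : ℕ → ℝ) (n : ℕ) (ω : ℝ) : ℝ :=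
  ∑ j ∈ Finset.range ((n + 1) / 2),
    (-1 : ℝ) ^ j * (if Even j then a (2 * j + 1) else b (2 * j + 1)) * ω ^ (2 * j + 1)

noncomputable def imh2 (a b : ℕ → ℝ) (n : ℕ) (ω : ℝ) : ℝ :=
  ∑ j ∈ Finset.range ((n + 1) / 2),
    (-1 : ℝ) ^ j * (if Even j then b (2 * j + 1) else a (2 * j + 1)) * ω ^ (2 * j + 1)

lemma powEven (ω : ℝ) (j : ℕ) :
    ((ω : ℂ) * Complex.I) ^ (2 * j) = (((-1 : ℝ) ^ j * ω ^ (2 * j) : ℝ) : ℂ) := by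
  rw [mul_pow, pow_mul Complex.I 2 j, Complex.I_sq]; push_cast; ring

lemma powOdd (ω : ℝ) (j : ℕ) :
    ((ω : ℂ) * Complex.I) ^ (2 * j + 1) =
      (((-1 : ℝ) ^ j * ω ^ (2 * j + 1) : ℝ) : ℂ) * Complex.I := by
  rw [pow_succ, mul_pow, pow_mul Complex.I 2 j, Complex.I_sq]; push_cast; ring

lemma evalRe (P : Polynomial ℝ) (n : ℕ) (hd : P.natDegree = n) (ω : ℝ) :
    ((P.map (algebraMap ℝ ℂ)).eval (ω * Complex.I)).re
      = ∑ j ∈ Finset.range (n / 2 + 1), (-1 : ℝ) ^ j * P.coeff (2 * j) * ω ^ (2 * j) := by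
  rw [eval_map, eval₂_eq_sum_range, hd, Complex.re_sum]
  set g : ℕ → ℝ := fun k => ((algebraMap ℝ ℂ) (P.coeff k) * ((ω : ℂ) * Complex.I) ^ k).re with hg
  have hsub : (Finset.range (n / 2 + 1)).image (2 * ·) ⊆ Finset.range (n + 1) := by
    intro k hk
    obtain ⟨j, hj1, hj2⟩ := Finset.mem_image.1 hk
    simp only [Finset.mem_range] at hj1 ⊢; omega
  have hzero : ∀ k ∈ Finset.range (n + 1), k ∉ (Finset.range (n / 2 + 1)).image (2 * ·) →
      g k = 0 := by
    intro k hk hnk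
    have hodd : Odd k := by
      rw [Nat.odd_iff]
      by_contra h
      refine hnk (Finset.mem_image.2 ⟨k / 2, ?_, by omega⟩)
      simp only [Finset.mem_range] at hk ⊢; omega
    obtain ⟨j, hj⟩ := hodd
    subst hj
    simp only [hg, powOdd, RingHom.coe_coe, Complex.coe_algebraMap]
    rw [show ((P.coeff (2 * j + 1) : ℂ) * (((-1 : ℝ) ^ j * ω ^ (2 * j + 1) : ℝ) * Complex.I))
        = ((P.coeff (2 * j + 1) * ((-1 : ℝ) ^ j * ω ^ (2 * j + 1)) : ℝ) : ℂ) * Complex.I from by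
      push_cast; ring]
    rw [Complex.mul_re, Complex.I_re, Complex.I_im, Complex.ofReal_re, Complex.ofReal_im]; ring
  rw [← Finset.sum_subset hsub hzero, Finset.sum_image (by intros a _ b _ h; simp only at h; omega)]
  refine Finset.sum_congr rfl fun j _ => ?_
  simp only [hg, powEven, RingHom.coe_coe, Complex.coe_algebraMap]
  rw [← Complex.ofReal_mul, Complex.ofReal_re]; ring

lemma evalIm (P : Polynomial ℝ) (n : ℕ) (hd : P.natDegree = n) (ω : ℝ) :
    ((P.map (algebraMap ℝ ℂ)).eval (ω * Complex.I)).im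
      = ∑ j ∈ Finset.range ((n + 1) / 2), (-1 : ℝ) ^ j * P.coeff (2 * j + 1) * ω ^ (2 * j + 1) := by
  rw [eval_map, eval₂_eq_sum_range, hd, Complex.im_sum]
  set g : ℕ → ℝ := fun k => ((algebraMap ℝ ℂ) (P.coeff k) * ((ω : ℂ) * Complex.I) ^ k).im with hg
  have hsub : (Finset.range ((n + 1) / 2)).image (fun j => 2 * j + 1) ⊆ Finset.range (n + 1) := by
    intro k hk
    obtain ⟨j, hj1, hj2⟩ := Finset.mem_image.1 hk
    simp only [Finset.mem_range] at hj1 ⊢; omega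
  have hzero : ∀ k ∈ Finset.range (n + 1),
      k ∉ (Finset.range ((n + 1) / 2)).image (fun j => 2 * j + 1) → g k = 0 := by
    intro k hk hnk
    have heven : k % 2 = 0 := by
      by_contra h
      refine hnk (Finset.mem_image.2 ⟨k / 2, ?_, by omega⟩)
      simp only [Finset.mem_range] at hk ⊢; omega
    obtain ⟨j, hj⟩ : ∃ j, k = 2 * j := ⟨k / 2, by omega⟩
    subst hj
    simp only [hg, powEven, RingHom.coe_coe, Complex.coe_algebraMap]
    rw [← Complex.ofReal_mul, Complex.ofReal_im]
  rw [← Finset.sum_subset hsub hzero, Finset.sum_image (by intros a _ b _ h; simp only at h; omega)]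
  refine Finset.sum_congr rfl fun j _ => ?_
  simp only [hg, powOdd, RingHom.coe_coe, Complex.coe_algebraMap]
  rw [show ((P.coeff (2 * j + 1) : ℂ) * (((-1 : ℝ) ^ j * ω ^ (2 * j + 1) : ℝ) * Complex.I))
      = ((P.coeff (2 * j + 1) * ((-1 : ℝ) ^ j * ω ^ (2 * j + 1)) : ℝ) : ℂ) * Complex.I from by
    push_cast; ring]
  rw [Complex.mul_im, Complex.I_re, Complex.I_im, Complex.ofReal_re, Complex.ofReal_im]; ring


section Aux

lemma powNonneg' (ω : ℝ) (j : ℕ) : 0 ≤ ω ^ (2 * j) := by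
  rw [pow_mul]; exact pow_nonneg (sq_nonneg ω) j

lemma reSandwich (a b : ℕ → ℝ) (n : ℕ) (ω : ℝ) (c : ℕ → ℝ)
    (hc : ∀ k, c k ∈ Set.Icc (a k) (b k)) :
    reg1 a b n ω ≤ (∑ j ∈ Finset.range (n / 2 + 1), (-1 : ℝ) ^ j * c (2 * j) * ω ^ (2 * j)) ∧
    (∑ j ∈ Finset.range (n / 2 + 1), (-1 : ℝ) ^ j * c (2 * j) * ω ^ (2 * j)) ≤ reg2 a b n ω := by
  constructor <;> refine Finset.sum_le_sum fun j _ => ?_ <;>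
    rcases Nat.even_or_odd j with hj | hj <;>
      [rw [hj.neg_one_pow, if_pos hj, one_mul, one_mul];
       rw [hj.neg_one_pow, if_neg (by simp [Nat.not_even_iff_odd.mpr hj])];
       rw [hj.neg_one_pow, if_pos hj, one_mul, one_mul];
       rw [hj.neg_one_pow, if_neg (by simp [Nat.not_even_iff_odd.mpr hj])]] <;>
    nlinarith [powNonneg' ω j, (hc (2 * j)).1, (hc (2 * j)).2]

lemma imSandwich (a b : ℕ → ℝ) (n : ℕ) (ω : ℝ) (hω : 0 ≤ ω) (c : ℕ → ℝ)
    (hc : ∀ k, c k ∈ Set.Icc (a k) (b k)) :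
    imh1 a b n ω ≤
      (∑ j ∈ Finset.range ((n + 1) / 2), (-1 : ℝ) ^ j * c (2 * j + 1) * ω ^ (2 * j + 1)) ∧
    (∑ j ∈ Finset.range ((n + 1) / 2), (-1 : ℝ) ^ j * c (2 * j + 1) * ω ^ (2 * j + 1)) ≤
      imh2 a b n ω := by
  constructor <;> refine Finset.sum_le_sum fun j _ => ?_ <;>
    rcases Nat.even_or_odd j with hj | hj <;>
      [rw [hj.neg_one_pow, if_pos hj, one_mul, one_mul];
       rw [hj.neg_one_pow, if_neg (by simp [Nat.not_even_iff_odd.mpr hj])];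
       rw [hj.neg_one_pow, if_pos hj, one_mul, one_mul];
       rw [hj.neg_one_pow, if_neg (by simp [Nat.not_even_iff_odd.mpr hj])]] <;>
    nlinarith [powNonneg' ω j, (hc (2 * j + 1)).1, (hc (2 * j + 1)).2,
      pow_nonneg hω (2 * j + 1)]

lemma ne_zero_of_sandwich {r1 r2 x : ℝ} (hpos : r1 * r2 > 0) (h1 : r1 ≤ x) (h2 : x ≤ r2) :
    x ≠ 0 := by
  rcases mul_pos_iff.1 hpos with ⟨h, h'⟩ | ⟨h, h'⟩
  · exact ne_of_gt (lt_of_lt_of_le h h1)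
  · exact ne_of_lt (lt_of_le_of_lt h2 h')

end Aux

/-- Membership of a polynomial `P` in the monic interval polynomial of degree `n`
with coefficient intervals `[a k, b k]`. -/
def memIntervalPoly (n : ℕ) (a b : ℕ → ℝ) (P : Polynomial ℝ) : Prop :=
  P.Monic ∧ P.natDegree = n ∧ ∀ k, P.coeff k ∈ Set.Icc (a k) (b k)

/-- If the products of the real (resp. imaginary) parts of the Kharitonov extremal
polynomials at `iω` are positive, no member of the interval family can have vanishing
real (resp. imaginary) part at `iω`; in particular if for every `ω ≥ 0` one of the
products is positive, no member has a root `iω` with `ω ≥ 0`. -/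
theorem kharitonov_products (n : ℕ) (a b : ℕ → ℝ) (han : a n = 1) (hbn : b n = 1) :
    (∀ ω : ℝ, 0 ≤ ω → reg1 a b n ω * reg2 a b n ω > 0 →
      ∀ P : Polynomial ℝ, memIntervalPoly n a b P →
        ((P.map (algebraMap ℝ ℂ)).eval (ω * Complex.I)).re ≠ 0) ∧
    (∀ ω : ℝ, 0 ≤ ω → imh1 a b n ω * imh2 a b n ω > 0 →
      ∀ P : Polynomial ℝ, memIntervalPoly n a b P →
        ((P.map (algebraMap ℝ ℂ)).eval (ω * Complex.I)).im ≠ 0) ∧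
    ((∀ ω : ℝ, 0 ≤ ω →
        reg1 a b n ω * reg2 a b n ω > 0 ∨ imh1 a b n ω * imh2 a b n ω > 0) →
      ∀ P : Polynomial ℝ, memIntervalPoly n a b P →
        ∀ ω : ℝ, 0 ≤ ω → (P.map (algebraMap ℝ ℂ)).eval (ω * Complex.I) ≠ 0) := by

  have mainRe : ∀ ω : ℝ, 0 ≤ ω → reg1 a b n ω * reg2 a b n ω > 0 →
      ∀ P : Polynomial ℝ, memIntervalPoly n a b P →
        ((P.map (algebraMap ℝ ℂ)).eval (ω * Complex.I)).re ≠ 0 := by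
    intro ω hω hpos P ⟨hm, hd, hc⟩
    rw [evalRe P n hd ω]
    obtain ⟨h1, h2⟩ := reSandwich a b n ω P.coeff hc
    exact ne_zero_of_sandwich hpos h1 h2
  have mainIm : ∀ ω : ℝ, 0 ≤ ω → imh1 a b n ω * imh2 a b n ω > 0 →
      ∀ P : Polynomial ℝ, memIntervalPoly n a b P →
        ((P.map (algebraMap ℝ ℂ)).eval (ω * Complex.I)).im ≠ 0 := by
    intro ω hω hpos P ⟨hm, hd, hc⟩
    rw [evalIm P n hd ω]
    obtain ⟨h1, h2⟩ := imSandwich a b n ω hω P.coeff hc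
    exact ne_zero_of_sandwich hpos h1 h2
  refine ⟨mainRe, mainIm, ?_⟩
  intro h P hP ω hω heq
  rcases h ω hω with hp | hp
  · exact mainRe ω hω hp P hP (by rw [heq]; rfl)
  · exact mainIm ω hω hp P hP (by rw [heq]; rfl)
end

section
/- Let S be a monic interval polynomial of degree n. Suppose some P₀ ∈ S is q-unstable (has exactly q roots with positive real part and n − q roots with negative real part), and suppose that for every ω ≥ 0, the pair (Re(g1(S,iω))·Re(g2(S,iω)), Im(h1(S,iω))·Im(h2(S,iω))) does not lie in the closed third quadrant {(x,y) : x ≤ 0, y ≤ 0}. Then the interval polynomial S is q-unstable, i.e., every P ∈ S has exactly q roots with positive real part and n − q with negative real part. -/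
open Polynomial

open scoped Classical in
noncomputable def posRootCount (P : Polynomial ℝ) : ℕ :=
  Multiset.card ((P.map (algebraMap ℝ ℂ)).roots.filter fun z => 0 < z.re)

open scoped Classical in
noncomputable def negRootCount (P : Polynomial ℝ) : ℕ :=
  Multiset.card ((P.map (algebraMap ℝ ℂ)).roots.filter fun z => z.re < 0)

/-!
Kharitonov's sandwich: on the imaginary axis the real and imaginary parts of every member of the
interval family lie between those of the extremal polynomials `g₁, g₂` and `h₁, h₂`, so the
third-quadrant condition says no member has a root `iω`. The segment from `P₀` to any member `P`
stays in the family, and since the roots of a monic polynomial of fixed degree depend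
continuously on its coefficients, the number of roots in the open right half-plane cannot jump
along the segment without a root crossing the imaginary axis.
-/

open Filter Topology

theorem Finset.sum_range_eq_sum_even_add_sum_odd {M : Type*} [AddCommMonoid M] (f : ℕ → M)
    (m : ℕ) : ∑ k ∈ range m, f k =
      ∑ j ∈ range ((m + 1) / 2), f (2 * j) + ∑ j ∈ range (m / 2), f (2 * j + 1) := by
  induction m with
  | zero => simp
  | succ m ih =>
    rw [sum_range_succ, ih]
    rcases Nat.even_or_odd' m with ⟨c, rfl | rfl⟩
    · rw [show (2 * c + 1 + 1) / 2 = c + 1 by omega, show (2 * c + 1) / 2 = c by omega,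
        show 2 * c / 2 = c by omega, sum_range_succ (fun j => f (2 * j))]
      abel
    · rw [show (2 * c + 1 + 1 + 1) / 2 = c + 1 by omega, show (2 * c + 1 + 1) / 2 = c + 1 by omega,
        show (2 * c + 1) / 2 = c by omega, sum_range_succ (fun j => f (2 * j + 1))]
      abel

theorem Polynomial.aeval_ofReal_mul_I {P : ℝ[X]} {n : ℕ} (hP : P.natDegree ≤ n) (ω : ℝ) :
    aeval (ω * Complex.I) P =
      ((∑ j ∈ Finset.range (n / 2 + 1), (-1) ^ j * P.coeff (2 * j) * ω ^ (2 * j) : ℝ) : ℂ) +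
      ((∑ j ∈ Finset.range ((n + 1) / 2), (-1) ^ j * P.coeff (2 * j + 1) * ω ^ (2 * j + 1) : ℝ)
        : ℂ) * Complex.I := by
  have hI : ∀ j : ℕ, ((ω : ℂ) * Complex.I) ^ (2 * j) = (-1) ^ j * (ω : ℂ) ^ (2 * j) := fun j => by
    rw [mul_pow, pow_mul Complex.I, Complex.I_sq, mul_comm]
  rw [aeval_eq_sum_range' (Nat.lt_succ_of_le hP), Finset.sum_range_eq_sum_even_add_sum_odd,
    show (n + 1 + 1) / 2 = n / 2 + 1 by omega]
  push_cast
  rw [Finset.sum_mul]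
  congr 1 <;> refine Finset.sum_congr rfl fun j _ => ?_
  · rw [Algebra.smul_def, Complex.coe_algebraMap, hI]; ring
  · rw [Algebra.smul_def, Complex.coe_algebraMap, pow_succ, hI]; ring

theorem neg_one_pow_mul_ite_le {x lo hi w : ℝ} (j : ℕ) (hlo : lo ≤ x) (hhi : x ≤ hi)
    (hw : 0 ≤ w) :
    (-1) ^ j * (if Even j then lo else hi) * w ≤ (-1) ^ j * x * w ∧
      (-1) ^ j * x * w ≤ (-1) ^ j * (if Even j then hi else lo) * w := by
  rcases Nat.even_or_odd j with hj | hj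
  · simp only [hj, hj.neg_one_pow, if_true, one_mul]
    exact ⟨by gcongr, by gcongr⟩
  · simp only [Nat.not_even_iff_odd.2 hj, hj.neg_one_pow, if_false, neg_mul]
    exact ⟨by gcongr, by gcongr⟩

theorem memIntervalPoly.aeval_ofReal_mul_I_ne_zero {n : ℕ} {a b : ℕ → ℝ} {P : ℝ[X]}
    (hP : memIntervalPoly n a b P) {ω : ℝ} (hω : 0 ≤ ω)
    (havoid : ¬ (reg1 a b n ω * reg2 a b n ω ≤ 0 ∧ imh1 a b n ω * imh2 a b n ω ≤ 0)) :
    aeval (ω * Complex.I) P ≠ 0 := by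
  intro h
  rw [aeval_ofReal_mul_I hP.2.1.le, Complex.ext_iff] at h
  simp only [Complex.add_re, Complex.ofReal_re, Complex.re_ofReal_mul, Complex.I_re, mul_zero,
    add_zero, Complex.zero_re, Complex.add_im, Complex.ofReal_im, Complex.im_ofReal_mul,
    Complex.I_im, mul_one, zero_add, Complex.zero_im] at h
  refine havoid ⟨mul_nonpos_of_nonpos_of_nonneg ?_ ?_, mul_nonpos_of_nonpos_of_nonneg ?_ ?_⟩
  · exact h.1 ▸ Finset.sum_le_sum fun j _ =>
      (neg_one_pow_mul_ite_le j (hP.2.2 _).1 (hP.2.2 _).2 ((even_two_mul j).pow_nonneg ω)).1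
  · exact h.1 ▸ Finset.sum_le_sum fun j _ =>
      (neg_one_pow_mul_ite_le j (hP.2.2 _).1 (hP.2.2 _).2 ((even_two_mul j).pow_nonneg ω)).2
  · exact h.2 ▸ Finset.sum_le_sum fun j _ =>
      (neg_one_pow_mul_ite_le j (hP.2.2 _).1 (hP.2.2 _).2 (pow_nonneg hω _)).1
  · exact h.2 ▸ Finset.sum_le_sum fun j _ =>
      (neg_one_pow_mul_ite_le j (hP.2.2 _).1 (hP.2.2 _).2 (pow_nonneg hω _)).2

theorem Polynomial.re_ne_zero_of_mem_roots_map {P : ℝ[X]} (hP : P ≠ 0)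
    (h : ∀ ω : ℝ, 0 ≤ ω → aeval (ω * Complex.I) P ≠ 0) :
    ∀ z ∈ (P.map (algebraMap ℝ ℂ)).roots, z.re ≠ 0 := by
  intro z hz hre
  rw [mem_roots_map hP, ← aeval_def] at hz
  rcases le_total 0 z.im with him | him
  · refine h z.im him ?_
    rwa [show (z.im : ℂ) * Complex.I = z by apply Complex.ext <;> simp [hre]]
  · refine h (-z.im) (neg_nonneg.2 him) ?_
    rw [show ((-z.im : ℝ) : ℂ) * Complex.I = (starRingEnd ℂ) z by
      apply Complex.ext <;> simp [hre], aeval_conj, hz, map_zero]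

theorem Multiset.exists_fin_map_univ_eq {α : Type*} {n : ℕ} (s : Multiset α) (hs : card s = n) :
    ∃ f : Fin n → α, Finset.univ.val.map f = s := by
  obtain ⟨l, rfl⟩ : ∃ l : List α, (l : Multiset α) = s := ⟨s.toList, s.coe_toList⟩
  rw [coe_card] at hs
  subst hs
  exact ⟨l.get, by rw [Fin.univ_val_map, List.ofFn_get]⟩

theorem Polynomial.continuous_coeff_prod_X_sub_C {R ι : Type*} [CommRing R] [TopologicalSpace R]
    [IsTopologicalRing R] (s : Finset ι) (c : ℕ) :
    Continuous fun z : ι → R => (∏ i ∈ s, (X - C (z i))).coeff c := by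
  classical
  induction s using Finset.induction_on generalizing c with
  | empty => exact continuous_const
  | insert i s hi ih =>
    simp only [Finset.prod_insert hi, sub_mul, coeff_sub, coeff_C_mul]
    refine Continuous.sub ?_ ((continuous_apply i).mul (ih c))
    cases c with
    | zero => simpa using continuous_const
    | succ c => simpa [coeff_X_mul] using ih c

theorem Polynomial.exists_nnnorm_le_of_mem_roots {n : ℕ} {p : ℕ → ℂ[X]} {p₀ : ℂ[X]}
    (hmonic : ∀ k, (p k).Monic) (hdeg : ∀ k, (p k).natDegree = n)
    (hcoeff : ∀ c, Tendsto (fun k => (p k).coeff c) atTop (𝓝 (p₀.coeff c))) :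
    ∃ R, ∀ k, ∀ z ∈ (p k).roots, ‖z‖₊ ≤ R := by
  have hbound : ∀ k, cauchyBound (p k) =
      (Finset.range n).sup (fun c => ‖(p k).coeff c‖₊) + 1 := fun k => by
    simp [cauchyBound, hdeg k, (hmonic k).leadingCoeff]
  have hlim : Tendsto (fun k => cauchyBound (p k)) atTop
      (𝓝 ((Finset.range n).sup (fun c => ‖p₀.coeff c‖₊) + 1)) := by
    simp_rw [hbound]
    exact (Tendsto.finset_sup_nhds_apply fun c _ => (hcoeff c).nnnorm).add_const 1
  obtain ⟨R, hR⟩ := hlim.bddAbove_range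
  exact ⟨R, fun k z hz => (IsRoot.norm_lt_cauchyBound (hmonic k).ne_zero
    (isRoot_of_mem_roots hz)).le.trans (hR ⟨k, rfl⟩)⟩

theorem Filter.Tendsto.eventually_mem_iff_of_notMem_frontier {α X : Type*} [TopologicalSpace X]
    {l : Filter α} {f : α → X} {x : X} {U : Set X} (hf : Tendsto f l (𝓝 x))
    (hx : x ∉ frontier U) : ∀ᶠ k in l, (f k ∈ U ↔ x ∈ U) := by
  by_cases hxU : x ∈ U
  · filter_upwards [hf.eventually (isOpen_interior.mem_nhds
      ((mem_interior_iff_notMem_frontier hxU).2 hx))] with k hk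
    exact iff_of_true (interior_subset hk) hxU
  · have : x ∉ closure U := fun h => hx ⟨h, fun h' => hxU (interior_subset h')⟩
    filter_upwards [hf.eventually (isClosed_closure.isOpen_compl.mem_nhds this)] with k hk
    exact iff_of_false (fun h => hk (subset_closure h)) hxU

open scoped Classical in
theorem Polynomial.exists_subseq_card_roots_filter_eq {n : ℕ} {p : ℕ → ℂ[X]} {p₀ : ℂ[X]}
    (hmonic : ∀ k, (p k).Monic) (hdeg : ∀ k, (p k).natDegree = n)
    (hcoeff : ∀ c, Tendsto (fun k => (p k).coeff c) atTop (𝓝 (p₀.coeff c)))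
    {U : Set ℂ} (hU : ∀ z ∈ p₀.roots, z ∉ frontier U) :
    ∃ φ : ℕ → ℕ, StrictMono φ ∧ ∀ᶠ k in atTop,
      ((p (φ k)).roots.filter (· ∈ U)).card = (p₀.roots.filter (· ∈ U)).card := by
  choose z hz using fun k => (p k).roots.exists_fin_map_univ_eq
    (IsAlgClosed.card_roots_eq_natDegree.trans (hdeg k))
  have hprod : ∀ k, p k = ∏ i, (X - C (z k i)) := fun k => by
    conv_lhs => rw [← prod_multiset_X_sub_C_of_monic_of_roots_card_eq (hmonic k)
      IsAlgClosed.card_roots_eq_natDegree, ← hz k, Multiset.map_map]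
    rfl
  obtain ⟨R, hR⟩ := exists_nnnorm_le_of_mem_roots hmonic hdeg hcoeff
  have hzR : ∀ k, z k ∈ Metric.closedBall 0 (R : ℝ) := fun k => by
    refine mem_closedBall_zero_iff.2 ((pi_norm_le_iff_of_nonneg R.2).2 fun i => ?_)
    exact_mod_cast hR k (z k i) (hz k ▸ Multiset.mem_map_of_mem _ (Finset.mem_univ i))
  obtain ⟨w, -, φ, hφ, hzw⟩ := tendsto_subseq_of_bounded Metric.isBounded_closedBall hzR
  have hp₀ : p₀ = ∏ i, (X - C (w i)) := by
    ext c
    refine tendsto_nhds_unique ((hcoeff c).comp hφ.tendsto_atTop) ?_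
    simpa only [Function.comp_def, ← hprod] using
      ((continuous_coeff_prod_X_sub_C Finset.univ c).tendsto w).comp hzw
  have hroots₀ : p₀.roots = Finset.univ.val.map w := by
    rw [hp₀, Finset.prod_eq_multiset_prod]
    simpa only [Multiset.map_map, Function.comp_def] using
      roots_multiset_prod_X_sub_C (Finset.univ.val.map w)
  have hsign : ∀ᶠ k in atTop, ∀ i, (z (φ k) i ∈ U ↔ w i ∈ U) :=
    eventually_all.2 fun i => ((continuous_apply i).tendsto w |>.comp hzw)
      |>.eventually_mem_iff_of_notMem_frontier
        (hU _ (hroots₀ ▸ Multiset.mem_map_of_mem _ (Finset.mem_univ i)))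
  refine ⟨φ, hφ, hsign.mono fun k hk => ?_⟩
  rw [← hz, hroots₀, Multiset.filter_map, Multiset.filter_map, Multiset.card_map,
    Multiset.card_map]
  exact congrArg _ (Multiset.filter_congr fun i _ => hk i)

open scoped Classical in
theorem Polynomial.eventually_card_roots_filter_eq {n : ℕ} {p : ℕ → ℂ[X]} {p₀ : ℂ[X]}
    (hmonic : ∀ k, (p k).Monic) (hdeg : ∀ k, (p k).natDegree = n)
    (hcoeff : ∀ c, Tendsto (fun k => (p k).coeff c) atTop (𝓝 (p₀.coeff c)))
    {U : Set ℂ} (hU : ∀ z ∈ p₀.roots, z ∉ frontier U) :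
    ∀ᶠ k in atTop,
      ((p k).roots.filter (· ∈ U)).card = (p₀.roots.filter (· ∈ U)).card := by
  by_contra h
  obtain ⟨ψ, hψ, hne⟩ := extraction_of_frequently_atTop (not_eventually.1 h)
  obtain ⟨φ, -, heq⟩ := exists_subseq_card_roots_filter_eq (fun k => hmonic (ψ k))
    (fun k => hdeg (ψ k)) (fun c => (hcoeff c).comp hψ.tendsto_atTop) hU
  obtain ⟨k, hk⟩ := heq.exists
  exact hne _ hk

theorem continuousOn_posRootCount {X : Type*} [TopologicalSpace X] [FirstCountableTopology X]
    {n : ℕ} {P : X → ℝ[X]} {s : Set X} (hmonic : ∀ x, (P x).Monic)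
    (hdeg : ∀ x, (P x).natDegree = n) (hcoeff : ∀ c, Continuous fun x => (P x).coeff c)
    (hroots : ∀ x ∈ s, ∀ z ∈ ((P x).map (algebraMap ℝ ℂ)).roots, z.re ≠ 0) :
    ContinuousOn (fun x => posRootCount (P x)) s := by
  intro x hx
  rw [ContinuousWithinAt, tendsto_iff_seq_tendsto]
  intro u hu
  rw [nhds_discrete, tendsto_pure]
  refine eventually_card_roots_filter_eq (n := n) (U := {z : ℂ | 0 < z.re})
    (fun k => (hmonic _).map _) (fun k => ((hmonic _).natDegree_map _).trans (hdeg _))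
    (fun c => ?_) (by simpa using hroots x hx)
  simp only [coeff_map, Complex.coe_algebraMap]
  exact (Complex.continuous_ofReal.comp (hcoeff c)).tendsto x |>.comp
    (hu.mono_right nhdsWithin_le_nhds)

theorem posRootCount_add_negRootCount {P : ℝ[X]}
    (hroots : ∀ z ∈ (P.map (algebraMap ℝ ℂ)).roots, z.re ≠ 0) :
    posRootCount P + negRootCount P = P.natDegree := by
  classical
  have hsplit := congrArg Multiset.card
    (Multiset.filter_add_not (fun z : ℂ => 0 < z.re) (P.map (algebraMap ℝ ℂ)).roots)
  rw [Multiset.card_add, IsAlgClosed.card_roots_eq_natDegree, natDegree_map] at hsplit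
  rw [posRootCount, negRootCount, ← hsplit, Multiset.filter_congr fun z hz =>
    not_lt.trans (le_iff_lt_or_eq.trans (or_iff_left (hroots z hz)))]

theorem Polynomial.Monic.add_smul_sub {R : Type*} [CommRing R] [Nontrivial R] {p q : R[X]}
    (hp : p.Monic) (hq : q.Monic) (hpq : p.natDegree = q.natDegree) (t : R) :
    (p + t • (q - p)).Monic ∧ (p + t • (q - p)).natDegree = p.natDegree := by
  have hdeg : p.degree = q.degree := by
    rw [degree_eq_natDegree hp.ne_zero, degree_eq_natDegree hq.ne_zero, hpq]
  have hlt : (t • (q - p)).degree < p.degree := by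
    refine (degree_smul_le t _).trans_lt ?_
    rw [← degree_neg, neg_sub]
    exact degree_sub_lt_left hdeg hp.ne_zero (hp.leadingCoeff.trans hq.leadingCoeff.symm)
  exact ⟨hp.add_of_left hlt, natDegree_add_eq_left_of_degree_lt hlt⟩

theorem memIntervalPoly.add_smul_sub {n : ℕ} {a b : ℕ → ℝ} {P Q : ℝ[X]}
    (hP : memIntervalPoly n a b P) (hQ : memIntervalPoly n a b Q) {t : ℝ}
    (ht : t ∈ Set.Icc (0 : ℝ) 1) : memIntervalPoly n a b (P + t • (Q - P)) := by
  obtain ⟨hmonic, hdeg⟩ := hP.1.add_smul_sub hQ.1 (hP.2.1.trans hQ.2.1.symm) t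
  refine ⟨hmonic, hdeg.trans hP.2.1, fun k => ?_⟩
  simpa only [coeff_add, coeff_smul, coeff_sub, smul_eq_mul] using
    (convex_Icc (a k) (b k)).add_smul_sub_mem (hP.2.2 k) (hQ.2.2 k) ht

theorem interval_q_unstable_general (n q : ℕ) (a b : ℕ → ℝ)
    (P₀ : Polynomial ℝ) (hP₀ : memIntervalPoly n a b P₀)
    (hpos₀ : posRootCount P₀ = q)
    (havoid : ∀ ω : ℝ, 0 ≤ ω →
      ¬ (reg1 a b n ω * reg2 a b n ω ≤ 0 ∧ imh1 a b n ω * imh2 a b n ω ≤ 0)) :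
    ∀ P : Polynomial ℝ, memIntervalPoly n a b P →
      posRootCount P = q ∧ negRootCount P = n - q := by
  intro P hP
  have hroots : ∀ Q, memIntervalPoly n a b Q →
      ∀ z ∈ (Q.map (algebraMap ℝ ℂ)).roots, z.re ≠ 0 := fun Q hQ =>
    re_ne_zero_of_mem_roots_map hQ.1.ne_zero fun ω hω =>
      hQ.aeval_ofReal_mul_I_ne_zero hω (havoid ω hω)
  have hsegment := fun t : ℝ => hP₀.1.add_smul_sub hP.1 (hP₀.2.1.trans hP.2.1.symm) t
  have hpos : posRootCount P = q := by
    have hconst := isPreconnected_Icc.constant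
      (f := fun t : ℝ => posRootCount (P₀ + t • (P - P₀)))
      (continuousOn_posRootCount (fun t => (hsegment t).1) (fun t => (hsegment t).2)
        (fun c => by simp only [coeff_add, coeff_smul, coeff_sub, smul_eq_mul]; fun_prop)
        (fun t ht => hroots _ (hP₀.add_smul_sub hP ht)))
      (Set.left_mem_Icc.2 zero_le_one) (Set.right_mem_Icc.2 zero_le_one)
    simpa [hpos₀] using hconst.symm
  have hsum := posRootCount_add_negRootCount (hroots P hP)
  rw [hP.2.1] at hsum
  exact ⟨hpos, by omega⟩

/-- Kharitonov-type result for `q`-instability: if some member `P₀` is `q`-unstable and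
for every `ω ≥ 0` the pair of products avoids the closed third quadrant, then every member
of the interval family is `q`-unstable. -/
theorem interval_q_unstable (n q : ℕ) (a b : ℕ → ℝ) (han : a n = 1) (hbn : b n = 1)
    (P₀ : Polynomial ℝ) (hP₀ : memIntervalPoly n a b P₀)
    (hpos₀ : posRootCount P₀ = q) (hneg₀ : negRootCount P₀ = n - q)
    (havoid : ∀ ω : ℝ, 0 ≤ ω →
      ¬ (reg1 a b n ω * reg2 a b n ω ≤ 0 ∧ imh1 a b n ω * imh2 a b n ω ≤ 0)) :
    ∀ P : Polynomial ℝ, memIntervalPoly n a b P →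
      posRootCount P = q ∧ negRootCount P = n - q :=
  interval_q_unstable_general n q a b P₀ hP₀ hpos₀ havoid
end

section
/- (Descartes' rule of signs, weak form.) Let p be a nonzero polynomial with real coefficients. The number of positive real roots of p, counted without multiplicity, is at most the number of sign changes in the sequence of nonzero coefficients of p ordered by increasing exponent. -/
open Polynomial

/-- The sequence of nonzero coefficients of `p`, ordered by increasing exponent. -/
noncomputable def nonzeroCoeffList (p : Polynomial ℝ) : List ℝ :=
  ((List.range (p.natDegree + 1)).map p.coeff).filter fun c => c ≠ 0

/-- The number of sign changes in the sequence of nonzero coefficients of `p`. -/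
noncomputable def signChanges (p : Polynomial ℝ) : ℕ :=
  (((nonzeroCoeffList p).zip (nonzeroCoeffList p).tail).filter
    fun q => q.1 * q.2 < 0).length


/-!
Counting roots with multiplicity, this is Mathlib's `Polynomial.roots_countP_pos_le_signVariations`.
What remains is to identify `signChanges` with `Polynomial.signVariations`, which reads the
coefficients from the leading one down and counts sign changes as the length of the destuttered
list of signs, minus one. Both count the adjacent pairs of distinct signs among the nonzero
coefficients, and that count does not depend on the direction of reading.
-/

namespace List

variable {α β : Type*}

def countAdjacent (r : α → α → Prop) [DecidableRel r] (l : List α) : ℕ :=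
  ((l.zip l.tail).filter fun q => r q.1 q.2).length

section countAdjacent

variable (r : α → α → Prop) [DecidableRel r]

@[simp] theorem countAdjacent_singleton (a : α) : countAdjacent r [a] = 0 := rfl

@[simp] theorem countAdjacent_cons_cons (a b : α) (l : List α) :
    countAdjacent r (a :: b :: l) = countAdjacent r (b :: l) + if r a b then 1 else 0 := by
  by_cases h : r a b <;> simp [countAdjacent, h]

theorem countAdjacent_append_pair : ∀ (l : List α) (a b : α),
    countAdjacent r (l ++ [a, b]) = countAdjacent r (l ++ [a]) + if r a b then 1 else 0
  | [], _, _ => by simp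
  | [_], _, _ => by simp [Nat.add_comm]
  | x :: y :: l, a, b => by
    have ih := countAdjacent_append_pair (y :: l) a b
    simp only [cons_append, countAdjacent_cons_cons] at ih ⊢
    omega

theorem countAdjacent_reverse [Std.Symm r] :
    ∀ l : List α, countAdjacent r l.reverse = countAdjacent r l
  | [] => rfl
  | [_] => rfl
  | a :: b :: l => by
    rw [reverse_cons, reverse_cons, append_assoc, singleton_append, countAdjacent_append_pair,
      ← reverse_cons, countAdjacent_reverse (b :: l), countAdjacent_cons_cons]
    simp only [Std.Symm.iff a b]

theorem countAdjacent_map {s : β → β → Prop} [DecidableRel s] {f : α → β} :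
    ∀ {l : List α}, (∀ a ∈ l, ∀ b ∈ l, r a b ↔ s (f a) (f b)) →
      countAdjacent s (l.map f) = countAdjacent r l
  | [], _ => rfl
  | [_], _ => rfl
  | a :: b :: l, h => by
    rw [map_cons, map_cons, countAdjacent_cons_cons, countAdjacent_cons_cons, ← map_cons,
      countAdjacent_map fun x hx y hy => h x (mem_cons_of_mem a hx) y (mem_cons_of_mem a hy)]
    simp only [h a mem_cons_self b (mem_cons_of_mem a mem_cons_self)]

end countAdjacent

theorem length_destutter'_ne [DecidableEq α] (a : α) (l : List α) :
    (l.destutter' (· ≠ ·) a).length = countAdjacent (· ≠ ·) (a :: l) + 1 := by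
  induction l generalizing a with
  | nil => rfl
  | cons b l ih =>
    by_cases h : a = b
    · subst h; simp [destutter', ih]
    · simp [destutter', ih, h]

theorem length_destutter_ne_sub_one [DecidableEq α] (l : List α) :
    (l.destutter (· ≠ ·)).length - 1 = countAdjacent (· ≠ ·) l := by
  cases l with
  | nil => rfl
  | cons a l => rw [destutter_cons', length_destutter'_ne, Nat.add_sub_cancel]

end List

theorem Multiset.card_filter_toFinset_le_countP {α : Type*} [DecidableEq α] (p : α → Prop)
    [DecidablePred p] (s : Multiset α) : (s.toFinset.filter p).card ≤ s.countP p := by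
  rw [← Multiset.toFinset_filter, Multiset.countP_eq_card_filter]
  exact Multiset.toFinset_card_le _

theorem mul_neg_iff_sign_ne {R : Type*} [Ring R] [LinearOrder R] [IsStrictOrderedRing R]
    {a b : R} (ha : a ≠ 0) (hb : b ≠ 0) : a * b < 0 ↔ SignType.sign a ≠ SignType.sign b := by
  rcases ha.lt_or_gt with ha | ha <;> rcases hb.lt_or_gt with hb | hb <;>
    simp [mul_neg_iff, ha, hb, ha.not_gt, hb.not_gt, sign_pos, sign_neg]

theorem signChanges_eq_countAdjacent (p : Polynomial ℝ) :
    signChanges p = (nonzeroCoeffList p).countAdjacent fun a b => a * b < 0 :=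
  rfl

theorem ne_zero_of_mem_nonzeroCoeffList {p : Polynomial ℝ} {x : ℝ}
    (hx : x ∈ nonzeroCoeffList p) : x ≠ 0 := by
  simpa [nonzeroCoeffList] using (List.mem_filter.1 hx).2

theorem filter_coeffList_ne_zero (p : Polynomial ℝ) :
    p.coeffList.filter (· ≠ 0) = (nonzeroCoeffList p).reverse := by
  rcases eq_or_ne p 0 with rfl | hp
  · simp [nonzeroCoeffList]
  · rw [nonzeroCoeffList, ← List.filter_reverse, ← List.map_reverse, coeffList,
      withBotSucc_degree_eq_natDegree_add_one hp]

theorem signChanges_eq_signVariations (p : Polynomial ℝ) : signChanges p = p.signVariations := by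
  simp only [signVariations, List.filter_map, Function.comp_def, sign_ne_zero]
  rw [filter_coeffList_ne_zero, List.map_reverse, List.length_destutter_ne_sub_one,
    List.countAdjacent_reverse, signChanges_eq_countAdjacent]
  refine (List.countAdjacent_map _ fun a ha b hb => ?_).symm
  exact mul_neg_iff_sign_ne (ne_zero_of_mem_nonzeroCoeffList ha)
    (ne_zero_of_mem_nonzeroCoeffList hb)

theorem descartes_rule_of_signs_general (p : Polynomial ℝ) :
    (p.roots.toFinset.filter fun x => 0 < x).card ≤ signChanges p :=
  calc (p.roots.toFinset.filter fun x => 0 < x).card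
      ≤ p.roots.countP (0 < ·) := Multiset.card_filter_toFinset_le_countP _ _
    _ ≤ p.signVariations := p.roots_countP_pos_le_signVariations
    _ = signChanges p := (signChanges_eq_signVariations p).symm

/-- Descartes' rule of signs (weak form): the number of positive real roots of a nonzero
real polynomial, counted without multiplicity, is at most the number of sign changes in
its sequence of nonzero coefficients. -/
theorem descartes_rule_of_signs (p : Polynomial ℝ) (hp : p ≠ 0) :
    (p.roots.toFinset.filter fun x => 0 < x).card ≤ signChanges p :=
  descartes_rule_of_signs_general p
end

section
/- (Kuratowski separation lemma.) Let X be a metric space, A and B two disjoint closed subsets of X, and K a compact subset of X with K ∩ A ≠ ∅ and K ∩ B ≠ ∅. If K contains no connected component K₀ with K₀ ∩ A ≠ ∅ and K₀ ∩ B ≠ ∅, then there exist two disjoint open sets V₁, V₂ ⊆ X with A ⊆ V₁, B ⊆ V₂, and A ∪ B ∪ K ⊆ V₁ ∪ V₂. -/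
/-!
The space of connected components of a compact Hausdorff space is compact, Hausdorff and totally
disconnected, so disjoint closed sets of it are separated by a clopen set. Applied to the images
of `A ∩ K` and `B ∩ K` in the components of `K`, this shows that `K` splits into two closed
pieces, one missing `B` and one missing `A`. Adding `A` to the first and `B` to the second gives
two disjoint closed sets, which normality separates by open sets.
-/

open Set

theorem exists_isClopen_of_connectedComponent_ne {Y : Type*} [TopologicalSpace Y]
    [CompactSpace Y] [T2Space Y] {A B : Set Y} (hA : IsClosed A) (hB : IsClosed B)
    (h : ∀ a ∈ A, ∀ b ∈ B, connectedComponent a ≠ connectedComponent b) :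
    ∃ C : Set Y, IsClopen C ∧ A ⊆ C ∧ Disjoint C B := by
  let π : Y → ConnectedComponents Y := ConnectedComponents.mk
  have hπ : Continuous π := ConnectedComponents.continuous_coe
  have hAπ : IsClosed (π '' A) := (hA.isCompact.image hπ).isClosed
  have hBπ : IsOpen (π '' B)ᶜ := ((hB.isCompact.image hπ).isClosed).isOpen_compl
  have hsep : π '' A ⊆ (π '' B)ᶜ := by
    rintro _ ⟨a, ha, rfl⟩ ⟨b, hb, hab⟩
    exact h a ha b hb (ConnectedComponents.coe_eq_coe.mp hab.symm)
  obtain ⟨C, hC, hAC, hCB⟩ := exists_clopen_of_closed_subset_open hAπ hBπ hsep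
  refine ⟨π ⁻¹' C, hC.preimage hπ, image_subset_iff.mp hAC, ?_⟩
  rw [disjoint_iff_forall_ne]
  rintro x hx b hb rfl
  exact hCB hx ⟨x, hb, rfl⟩

theorem IsCompact.exists_isClosed_split_of_connectedComponentIn {X : Type*}
    [TopologicalSpace X] [T2Space X] {A B K : Set X} (hA : IsClosed A) (hB : IsClosed B)
    (hK : IsCompact K)
    (h : ∀ x ∈ K, ¬((connectedComponentIn K x ∩ A).Nonempty ∧
      (connectedComponentIn K x ∩ B).Nonempty)) :
    ∃ K₁ ⊆ K, IsClosed K₁ ∧ IsClosed (K \ K₁) ∧ Disjoint K₁ B ∧ Disjoint (K \ K₁) A := by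
  have : CompactSpace K := isCompact_iff_compactSpace.mp hK
  have hne : ∀ a ∈ (↑) ⁻¹' A, ∀ b ∈ (↑) ⁻¹' B,
      connectedComponent a ≠ connectedComponent (b : K) := by
    intro a ha b hb hab
    have hmem : ∀ y : K, y ∈ connectedComponent a → ↑y ∈ connectedComponentIn K (a : X) :=
      fun y hy => connectedComponentIn_eq_image a.2 ▸ mem_image_of_mem _ hy
    exact h a a.2 ⟨⟨a, hmem a mem_connectedComponent, ha⟩,
      ⟨b, hmem b (hab ▸ mem_connectedComponent), hb⟩⟩
  obtain ⟨C, hC, hAC, hCB⟩ := exists_isClopen_of_connectedComponent_ne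
    (hA.preimage continuous_subtype_val) (hB.preimage continuous_subtype_val) hne
  have hclosed : ∀ {D : Set K}, IsClosed D → IsClosed ((↑) '' D : Set X) :=
    fun hD => (hD.isCompact.image continuous_subtype_val).isClosed
  have hcompl : K \ (↑) '' C = (↑) '' Cᶜ := by
    rw [image_compl_eq_range_sdiff_image Subtype.val_injective, Subtype.range_coe]
  refine ⟨(↑) '' C, Subtype.coe_image_subset K C, hclosed hC.isClosed,
    hcompl ▸ hclosed hC.compl.isClosed, disjoint_image_left.mpr hCB, ?_⟩
  rw [hcompl, disjoint_image_left]
  exact disjoint_compl_left_iff_subset.mpr hAC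

theorem kuratowski_separation_general {X : Type*} [MetricSpace X] (A B K : Set X)
    (hA : IsClosed A) (hB : IsClosed B) (hAB : Disjoint A B)
    (hK : IsCompact K)
    (hcomp : ¬ ∃ x ∈ K, (connectedComponentIn K x ∩ A).Nonempty ∧
      (connectedComponentIn K x ∩ B).Nonempty) :
    ∃ V₁ V₂ : Set X, IsOpen V₁ ∧ IsOpen V₂ ∧ Disjoint V₁ V₂ ∧
      A ⊆ V₁ ∧ B ⊆ V₂ ∧ A ∪ B ∪ K ⊆ V₁ ∪ V₂ := by
  obtain ⟨K₁, -, hK₁, hK₂, hK₁B, hK₂A⟩ :=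
    hK.exists_isClosed_split_of_connectedComponentIn hA hB fun x hx hxAB => hcomp ⟨x, hx, hxAB⟩
  have hdisj : Disjoint (A ∪ K₁) (B ∪ K \ K₁) :=
    disjoint_union_left.mpr ⟨disjoint_union_right.mpr ⟨hAB, hK₂A.symm⟩,
      disjoint_union_right.mpr ⟨hK₁B, disjoint_sdiff_right⟩⟩
  obtain ⟨V₁, V₂, hV₁, hV₂, hAV₁, hBV₂, hV⟩ :=
    normal_separation (hA.union hK₁) (hB.union hK₂) hdisj
  refine ⟨V₁, V₂, hV₁, hV₂, hV, subset_union_left.trans hAV₁, subset_union_left.trans hBV₂, ?_⟩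
  calc A ∪ B ∪ K ⊆ (A ∪ K₁) ∪ (B ∪ K \ K₁) := by
        intro x
        simp only [mem_union, mem_sdiff]
        tauto
    _ ⊆ V₁ ∪ V₂ := union_subset_union hAV₁ hBV₂

/-- Kuratowski separation lemma: if a compact set `K` in a metric space meets both of
two disjoint closed sets `A`, `B` but contains no connected component meeting both,
then `A`, `B` and `K` can be separated by two disjoint open sets. -/
theorem kuratowski_separation {X : Type*} [MetricSpace X] (A B K : Set X)
    (hA : IsClosed A) (hB : IsClosed B) (hAB : Disjoint A B)
    (hK : IsCompact K) (hKA : (K ∩ A).Nonempty) (hKB : (K ∩ B).Nonempty)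
    (hcomp : ¬ ∃ x ∈ K, (connectedComponentIn K x ∩ A).Nonempty ∧
      (connectedComponentIn K x ∩ B).Nonempty) :
    ∃ V₁ V₂ : Set X, IsOpen V₁ ∧ IsOpen V₂ ∧ Disjoint V₁ V₂ ∧
      A ⊆ V₁ ∧ B ⊆ V₂ ∧ A ∪ B ∪ K ⊆ V₁ ∪ V₂ :=
  kuratowski_separation_general A B K hA hB hAB hK hcomp
end
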